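/- arXiv:2003.14153 — 7 statements merged into one kernel-verified Lean document; each statement's English description precedes it below -/
import Mathlib

section
/- If an odd positive integer n is connected to 1 under the Syracuse function (i.e., some iterate of the Syracuse map sends n to 1), then there exist a natural number b and integers a > u_1 > u_2 > ... > u_b = 0 with n = 2^a/3^b - Σ_{i=1}^{b} 2^{u_i}/3^{b-i+1}. -/
/-- The Syracuse function: maps an odd positive integer `n` to `(3n+1)/2^j`,
where `2^j` is the exact power of 2 dividing `3n+1`. -/
def syracuse (n : ℕ) : ℕ := (3 * n + 1) / 2 ^ (padicValNat 2 (3 * n + 1))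

theorem stmt0 (n : ℕ) (hodd : Odd n) (hpos : 0 < n)
    (hconn : ∃ k : ℕ, syracuse^[k] n = 1) :
    ∃ (b a : ℕ) (u : ℕ → ℕ), u 0 = a ∧ u b = 0 ∧ (∀ i, i < b → u (i + 1) < u i) ∧
      (n : ℚ) = 2 ^ a / 3 ^ b - ∑ i ∈ Finset.Icc 1 b, (2 : ℚ) ^ (u i) / 3 ^ (b - i + 1) := by
  obtain ⟨k, hk⟩ := hconn
  induction k generalizing n with
  | zero =>
    simp at hk
    subst hk
    exact ⟨0, 0, fun _ => 0, rfl, rfl, by omega, by norm_num⟩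
  | succ k ih =>
    set j := padicValNat 2 (3 * n + 1) with hj
    set m := syracuse n with hmdef
    have hne : 3 * n + 1 ≠ 0 := by omega
    have hdvd : 2 ^ j ∣ 3 * n + 1 := pow_padicValNat_dvd
    have hjfact : j = (3 * n + 1).factorization 2 := by
      rw [hj, Nat.factorization_def _ Nat.prime_two]
    have hmform : m = ordCompl[2] (3 * n + 1) := by
      rw [hmdef, syracuse, ← hjfact]
    have hnd : ¬ (2 ∣ m) := hmform ▸ Nat.not_dvd_ordCompl Nat.prime_two hne
    have hmodd : Odd m := Nat.odd_iff.mpr (Nat.two_dvd_ne_zero.mp hnd)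
    have hmpos : 0 < m := by
      rcases Nat.eq_zero_or_pos m with h | h
      · exact absurd (h ▸ dvd_zero 2) hnd
      · exact h
    have hmeq : 2 ^ j * m = 3 * n + 1 := by
      rw [hmdef, syracuse, ← hj, Nat.mul_div_cancel' hdvd]
    have hjpos : 1 ≤ j := by
      haveI : Fact (Nat.Prime 2) := ⟨Nat.prime_two⟩
      apply one_le_padicValNat_of_dvd (by omega)
      obtain ⟨t, ht⟩ := hodd
      exact ⟨3 * t + 2, by omega⟩
    have hk' : syracuse^[k] m = 1 := by
      rw [hmdef, ← Function.iterate_succ_apply]; exact hk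
    obtain ⟨b, a, u, hu0, hub, hdec, heq⟩ := ih m hmodd hmpos hk'
    refine ⟨b + 1, j + a, fun i => if i = b + 1 then 0 else j + u i, by simp [hu0], by simp, ?_, ?_⟩
    · intro i hi
      rcases Nat.lt_or_ge i b with h | h
      · simp only [if_neg (by omega : ¬ i + 1 = b + 1), if_neg (by omega : ¬ i = b + 1)]
        exact Nat.add_lt_add_left (hdec i h) j
      · have hib : i = b := by omega
        simp only [hib, reduceIte, if_neg (show ¬ b = b + 1 by omega), hub]
        omega
    · have hQ : (2 : ℚ) ^ j * m = 3 * n + 1 := by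
        exact_mod_cast congrArg (Nat.cast : ℕ → ℚ) hmeq
      rw [Finset.sum_Icc_succ_top (by omega : 1 ≤ b + 1)]
      have hsum : ∑ i ∈ Finset.Icc 1 b,
          (2 : ℚ) ^ (if i = b + 1 then 0 else j + u i) / 3 ^ (b + 1 - i + 1)
          = (2 ^ j / 3) * ∑ i ∈ Finset.Icc 1 b, (2 : ℚ) ^ (u i) / 3 ^ (b - i + 1) := by
        rw [Finset.mul_sum]
        apply Finset.sum_congr rfl
        intro i hi
        simp only [Finset.mem_Icc] at hi
        rw [if_neg (by omega : ¬ i = b + 1)]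
        have h1 : b + 1 - i + 1 = (b - i + 1) + 1 := by omega
        rw [h1, pow_add, pow_succ]
        field_simp
      have h2 : b + 1 - (b + 1) + 1 = 1 := by omega
      have h3 : (3:ℚ) ^ b ≠ 0 := by positivity
      have hS : ∑ i ∈ Finset.Icc 1 b, (2 : ℚ) ^ (u i) / 3 ^ (b - i + 1)
          = 2 ^ a / 3 ^ b - m := by linarith [heq]
      rw [hsum]
      simp only [reduceIte, h2, hS]
      linear_combination -hQ / 3
end

section
/- For any rational number of the form 2^a/3^b with a ≥ b·log₂(3) (so 2^a ≥ 3^b) and integers a > u_1 > ... > u_b = 0, the quantity 2^a/3^b - Σ_{i=1}^{b} 2^{u_i}/3^{b-i+1} is a positive integer if and only if 2^a ≡ Σ_{i=1}^{b-1} 2^{u_i}·3^{i-1} + 3^{b-1} (mod 3^b). -/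
/-!
Put `R i = 2^a - ∑_{j=1}^{i} 2^{u_j} 3^{j-1}`, so that the quantity in question is `R b / 3^b`
and the congruence says `3^b ∣ R b`. Each `R i` is divisible by `2^{u_i}`, and `3^b ∣ R b` forces
`3^i ∣ R i` for all `i ≤ b`. Hence by induction `2^{u_i} 3^i ≤ R i`: if this holds for `i`, then
`R (i+1) = R i - 2^{u_{i+1}} 3^i ≥ (2^{u_i} - 2^{u_{i+1}}) 3^i > 0`, and a positive multiple of
`2^{u_{i+1}} 3^{i+1}` is at least that number. In particular `R b ≥ 3^b > 0`.
-/

open Finset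

def collatzResidual (u : ℕ → ℕ) (i : ℕ) : ℤ :=
  2 ^ u 0 - ∑ j ∈ Icc 1 i, 2 ^ u j * 3 ^ (j - 1)

namespace collatzResidual

variable (u : ℕ → ℕ)

@[simp]
lemma zero : collatzResidual u 0 = 2 ^ u 0 := by
  simp [collatzResidual]

lemma succ (i : ℕ) :
    collatzResidual u (i + 1) = collatzResidual u i - 2 ^ u (i + 1) * 3 ^ i := by
  rw [collatzResidual, collatzResidual, sum_Icc_succ_top (by omega), Nat.add_sub_cancel]
  ring

lemma pow_two_dvd {i : ℕ} (hu : ∀ j < i, u (j + 1) ≤ u j) :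
    2 ^ u i ∣ collatzResidual u i := by
  induction i with
  | zero => simp
  | succ i ih =>
    rw [succ]
    refine dvd_sub ?_ (dvd_mul_right _ _)
    exact (pow_dvd_pow 2 (hu i i.lt_succ_self)).trans (ih fun j hj => hu j (by omega))

lemma pow_three_dvd_of_le {i k : ℕ} (hik : i ≤ k) (hk : 3 ^ k ∣ collatzResidual u k) :
    3 ^ i ∣ collatzResidual u i := by
  induction k, hik using Nat.le_induction with
  | base => exact hk
  | succ k _ ih =>
    apply ih
    have h : 3 ^ k ∣ collatzResidual u (k + 1) := (pow_dvd_pow 3 k.le_succ).trans hk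
    have hstep : collatzResidual u k = collatzResidual u (k + 1) + 2 ^ u (k + 1) * 3 ^ k := by
      rw [succ]; ring
    rw [hstep]
    exact dvd_add h (dvd_mul_left _ _)

lemma pow_mul_pow_le {k : ℕ} (hu : ∀ j < k, u (j + 1) < u j)
    (hk : 3 ^ k ∣ collatzResidual u k) {i : ℕ} (hik : i ≤ k) :
    2 ^ u i * 3 ^ i ≤ collatzResidual u i := by
  induction i with
  | zero => simp
  | succ i ih =>
    have hpos : 0 < collatzResidual u (i + 1) := by
      have hdouble : (2 : ℤ) ^ u (i + 1) * 2 ≤ 2 ^ u i := by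
        rw [← pow_succ]; exact pow_le_pow_right₀ (by norm_num) (hu i (by omega))
      calc (0 : ℤ) < 2 ^ u (i + 1) * 3 ^ i := by positivity
        _ ≤ (2 ^ u i - 2 ^ u (i + 1)) * 3 ^ i := by gcongr; linarith
        _ ≤ collatzResidual u i - 2 ^ u (i + 1) * 3 ^ i := by linarith [ih (by omega)]
        _ = collatzResidual u (i + 1) := (succ u i).symm
    have hdvd : 2 ^ u (i + 1) * 3 ^ (i + 1) ∣ collatzResidual u (i + 1) :=
      IsCoprime.mul_dvd (Int.isCoprime_iff_gcd_eq_one.mpr rfl).pow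
        (pow_two_dvd u fun j hj => (hu j (by omega)).le) (pow_three_dvd_of_le u hik hk)
    exact Int.le_of_dvd hpos hdvd

lemma pos_of_pow_three_dvd {k : ℕ} (hu : ∀ j < k, u (j + 1) < u j)
    (hk : 3 ^ k ∣ collatzResidual u k) : 0 < collatzResidual u k :=
  lt_of_lt_of_le (by positivity) (pow_mul_pow_le u hu hk le_rfl)

end collatzResidual

lemma exists_pos_natCast_eq_div_iff {x m : ℤ} (hm : 0 < m) :
    (∃ n : ℕ, 0 < n ∧ (n : ℚ) = x / m) ↔ m ∣ x ∧ 0 < x := by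
  have hm' : (m : ℚ) ≠ 0 := by exact_mod_cast hm.ne'
  constructor
  · rintro ⟨n, hn, hnx⟩
    rw [eq_div_iff hm'] at hnx
    have hx : x = n * m := by exact_mod_cast hnx.symm
    exact ⟨⟨n, by rw [hx, mul_comm]⟩, hx ▸ by positivity⟩
  · rintro ⟨⟨k, rfl⟩, hx⟩
    have hk : 0 < k := pos_of_mul_pos_right hx hm.le
    refine ⟨k.toNat, by omega, ?_⟩
    rw [Int.cast_mul, mul_div_cancel_left₀ _ hm', ← Int.cast_natCast, Int.toNat_of_nonneg hk.le]

theorem stmt1_general (b a : ℕ) (hb : 1 ≤ b) (u : ℕ → ℕ) (hu0 : u 0 = a) (hub : u b = 0)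
    (hdec : ∀ i, i < b → u (i + 1) < u i) :
    (∃ n : ℕ, 0 < n ∧
        (n : ℚ) = 2 ^ a / 3 ^ b - ∑ i ∈ Finset.Icc 1 b, (2 : ℚ) ^ (u i) / 3 ^ (b - i + 1)) ↔
      2 ^ a ≡ (∑ i ∈ Finset.Icc 1 (b - 1), 2 ^ (u i) * 3 ^ (i - 1)) + 3 ^ (b - 1) [MOD 3 ^ b] := by
  subst hu0
  have hquot : (2 : ℚ) ^ u 0 / 3 ^ b - ∑ i ∈ Icc 1 b, (2 : ℚ) ^ u i / 3 ^ (b - i + 1)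
      = (collatzResidual u b : ℚ) / ((3 ^ b : ℤ) : ℚ) := by
    rw [collatzResidual]
    push_cast
    rw [sub_div, sum_div]
    congr 1
    refine sum_congr rfl fun i hi => ?_
    rw [mem_Icc] at hi
    rw [div_eq_div_iff (by positivity) (by positivity), mul_assoc, ← pow_add,
      show i - 1 + (b - i + 1) = b by omega]
  have hmod : (2 ^ u 0 ≡ (∑ i ∈ Icc 1 (b - 1), 2 ^ u i * 3 ^ (i - 1)) + 3 ^ (b - 1) [MOD 3 ^ b])
      ↔ (3 ^ b : ℤ) ∣ collatzResidual u b := by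
    obtain ⟨c, rfl⟩ : ∃ c, b = c + 1 := ⟨b - 1, by omega⟩
    rw [Nat.modEq_iff_dvd, ← dvd_neg, collatzResidual, sum_Icc_succ_top (by omega), hub]
    push_cast
    ring_nf
  rw [hquot, exists_pos_natCast_eq_div_iff (by positivity), hmod]
  exact ⟨And.left, fun h => ⟨h, collatzResidual.pos_of_pow_three_dvd u hdec h⟩⟩

theorem stmt1 (b a : ℕ) (hb : 1 ≤ b) (u : ℕ → ℕ) (hu0 : u 0 = a) (hub : u b = 0)
    (hdec : ∀ i, i < b → u (i + 1) < u i) (hab : 3 ^ b ≤ 2 ^ a) :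
    (∃ n : ℕ, 0 < n ∧
        (n : ℚ) = 2 ^ a / 3 ^ b - ∑ i ∈ Finset.Icc 1 b, (2 : ℚ) ^ (u i) / 3 ^ (b - i + 1)) ↔
      2 ^ a ≡ (∑ i ∈ Finset.Icc 1 (b - 1), 2 ^ (u i) * 3 ^ (i - 1)) + 3 ^ (b - 1) [MOD 3 ^ b] :=
  stmt1_general b a hb u hu0 hub hdec
end

section
/- For every b ≥ 2 and every choice of positive integers v_2, ..., v_b with 1 ≤ v_i ≤ 2·3^{b-i}, there exists a unique v_1 with 4 ≤ v_1 ≤ 2·3^{b-1}+2 such that 2^{v_1+...+v_b} ≡ Σ_{i=1}^{b-1} 2^{Σ_{j=i+1}^{b} v_j}·3^{i-1} + 3^{b-1} (mod 3^b). -/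
/-!
2 is a primitive root modulo `3 ^ b`: `2 ^ 2 = 1 + 3` has order `3 ^ (b - 1)` and `2 ≡ -1 (mod 3)`
has even order, so `2` has order `2 * 3 ^ (b - 1) = φ (3 ^ b)`. Writing `S = v_2 + ⋯ + v_b`, the
right-hand side `R` is `≡ 2 ^ S (mod 3)`, hence a unit, so the admissible `v_1` form a single
residue class modulo `2 * 3 ^ (b - 1)`. The window `[4, 2 * 3 ^ (b - 1) + 3]` contains exactly one
member of that class, and reducing modulo `3` shows that it is even, so it is not the odd endpoint.
-/

namespace ZMod

theorem two_dvd_orderOf_two_three_pow (k : ℕ) : 2 ∣ orderOf (2 : ZMod (3 ^ (k + 1))) := by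
  have hmap := orderOf_map_dvd (ZMod.castHom (dvd_pow_self 3 k.succ_ne_zero) (ZMod 3)).toMonoidHom
    (2 : ZMod (3 ^ (k + 1)))
  have h2 : orderOf (2 : ZMod 3) = 2 := orderOf_eq_prime (by decide) (by decide)
  rwa [RingHom.toMonoidHom_eq_coe, MonoidHom.coe_coe, map_ofNat, h2] at hmap

theorem orderOf_two_three_pow (k : ℕ) : orderOf (2 : ZMod (3 ^ (k + 1))) = 2 * 3 ^ k := by
  obtain ⟨m, hm⟩ := two_dvd_orderOf_two_three_pow k
  have h4 : orderOf (1 + 3 : ZMod (3 ^ (k + 1))) = 3 ^ k := by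
    exact_mod_cast orderOf_one_add_prime Nat.prime_three (by norm_num) k
  rw [show (1 + 3 : ZMod (3 ^ (k + 1))) = 2 ^ 2 by norm_num, orderOf_pow' _ two_ne_zero, hm,
    Nat.gcd_mul_right_left, Nat.mul_div_cancel_left _ two_pos] at h4
  rw [hm, h4]

end ZMod

namespace Nat

theorem two_pow_modEq_two_pow_iff (k a c : ℕ) :
    2 ^ a ≡ 2 ^ c [MOD 3 ^ (k + 1)] ↔ a ≡ c [MOD 2 * 3 ^ k] := by
  have hfin : IsOfFinOrder (2 : ZMod (3 ^ (k + 1))) := by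
    rw [← orderOf_pos_iff, ZMod.orderOf_two_three_pow]; positivity
  rw [← ZMod.natCast_eq_natCast_iff, ← ZMod.orderOf_two_three_pow, ← hfin.pow_eq_pow_iff_modEq]
  push_cast
  rfl

theorem exists_two_pow_modEq (k : ℕ) {r : ℕ} (hr : r.Coprime 3) :
    ∃ e, 2 ^ e ≡ r [MOD 3 ^ (k + 1)] := by
  have two : IsUnit (2 : ZMod (3 ^ (k + 1))) := by
    exact_mod_cast (ZMod.isUnit_iff_coprime 2 _).mpr (Nat.Coprime.pow_right _ (by norm_num))
  have hr' : IsUnit (r : ZMod (3 ^ (k + 1))) :=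
    (ZMod.isUnit_iff_coprime r _).mpr (Nat.Coprime.pow_right _ hr)
  have htop : Subgroup.zpowers two.unit = ⊤ := by
    apply Subgroup.eq_top_of_card_eq
    rw [Nat.card_zpowers, ← orderOf_units, IsUnit.unit_spec, ZMod.orderOf_two_three_pow,
      Nat.card_eq_fintype_card, ZMod.card_units_eq_totient,
      Nat.totient_prime_pow_succ Nat.prime_three, mul_comm]
  obtain ⟨e, he⟩ := (mem_powers_iff_mem_zpowers (y := hr'.unit)).mpr (htop ▸ Subgroup.mem_top _)
  refine ⟨e, (ZMod.natCast_eq_natCast_iff _ _ _).mp ?_⟩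
  simpa using congrArg Units.val he

section TwoPowAdd

variable {k S R : ℕ}

theorem exists_two_pow_add_modEq (k S : ℕ) (hR : R.Coprime 3) :
    ∃ x, 2 ^ (x + S) ≡ R [MOD 3 ^ (k + 1)] := by
  obtain ⟨e, he⟩ := exists_two_pow_modEq k hR
  refine ⟨e + (2 * 3 ^ k - 1) * S, ((two_pow_modEq_two_pow_iff k _ e).mpr ?_).trans he⟩
  rw [add_assoc, ← Nat.succ_mul, Nat.succ_eq_add_one, Nat.sub_add_cancel (by positivity : 0 < 2 * 3 ^ k)]
  exact add_mul_mod_self_left e _ S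

theorem two_pow_add_modEq_iff {x : ℕ} (hx : 2 ^ (x + S) ≡ R [MOD 3 ^ (k + 1)]) (y : ℕ) :
    2 ^ (y + S) ≡ R [MOD 3 ^ (k + 1)] ↔ y ≡ x [MOD 2 * 3 ^ k] :=
  calc 2 ^ (y + S) ≡ R [MOD 3 ^ (k + 1)] ↔ 2 ^ (y + S) ≡ 2 ^ (x + S) [MOD 3 ^ (k + 1)] :=
        ⟨(·.trans hx.symm), (·.trans hx)⟩
    _ ↔ y + S ≡ x + S [MOD 2 * 3 ^ k] := two_pow_modEq_two_pow_iff k _ _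
    _ ↔ y ≡ x [MOD 2 * 3 ^ k] := ⟨ModEq.add_right_cancel' S, (·.add_right S)⟩

theorem modEq_zero_two_of_two_pow_add_modEq {x : ℕ} (hR : R ≡ 2 ^ S [MOD 3])
    (hx : 2 ^ (x + S) ≡ R [MOD 3 ^ (k + 1)]) : x ≡ 0 [MOD 2] := by
  have h3 : 2 ^ (x + S) ≡ 2 ^ (0 + S) [MOD 3 ^ (0 + 1)] :=
    (hx.of_dvd (dvd_pow_self 3 k.succ_ne_zero)).trans (by rwa [zero_add])
  exact ModEq.add_right_cancel' S ((two_pow_modEq_two_pow_iff 0 _ _).mp h3)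

end TwoPowAdd

theorem existsUnique_Ico_of_forall_iff_modEq {P : ℕ → Prop} {n : ℕ} (hn : 0 < n) (k : ℕ)
    (hex : ∃ x, P x) (hP : ∀ x, P x → ∀ y, (P y ↔ y ≡ x [MOD n])) :
    ∃! x, (k ≤ x ∧ x < k + n) ∧ P x := by
  obtain ⟨x₀, hx₀⟩ := hex
  have hkn : k ≤ x₀ + n * k := (Nat.le_mul_of_pos_left k hn).trans (Nat.le_add_left _ _)
  have hlt := mod_lt (x₀ + n * k - k) hn
  have hx : k + (x₀ + n * k - k) % n ≡ x₀ [MOD n] :=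
    calc k + (x₀ + n * k - k) % n ≡ k + (x₀ + n * k - k) [MOD n] := (mod_modEq _ n).add_left k
      _ = x₀ + n * k := by omega
      _ ≡ x₀ [MOD n] := add_mul_mod_self_left x₀ n k
  refine ⟨_, ⟨⟨le_add_right k _, by omega⟩, (hP _ hx₀ _).mpr hx⟩, ?_⟩
  rintro y ⟨⟨hky, hyk⟩, hy⟩
  exact ((hP _ hx₀ _).mp hy).trans hx.symm |>.eq_of_abs_lt <| abs_sub_lt_iff.mpr ⟨by omega, by omega⟩

theorem sum_mul_three_pow_modEq (f : ℕ → ℕ) {m : ℕ} (hm : 1 ≤ m) :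
    ∑ i ∈ Finset.Icc 1 m, f i * 3 ^ (i - 1) ≡ f 1 [MOD 3] := by
  rw [← ZMod.natCast_eq_natCast_iff]
  push_cast
  rw [Finset.sum_eq_single_of_mem 1 (by simp [hm])]
  · simp
  · intro i hi _
    have : i - 1 ≠ 0 := by simp only [Finset.mem_Icc] at hi; omega
    simp [show (3 : ZMod 3) = 0 from rfl, zero_pow this]

end Nat

theorem stmt2_general (b : ℕ) (hb : 2 ≤ b) (v : ℕ → ℕ) :
    ∃! v1 : ℕ, (4 ≤ v1 ∧ v1 ≤ 2 * 3 ^ (b - 1) + 2) ∧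
      2 ^ (v1 + ∑ i ∈ Finset.Icc 2 b, v i) ≡
        (∑ i ∈ Finset.Icc 1 (b - 1), 2 ^ (∑ j ∈ Finset.Icc (i + 1) b, v j) * 3 ^ (i - 1)) +
          3 ^ (b - 1) [MOD 3 ^ b] := by
  obtain ⟨k, rfl⟩ : ∃ k, b = k + 1 := ⟨b - 1, by omega⟩
  simp only [Nat.add_sub_cancel]
  set S := ∑ i ∈ Finset.Icc 2 (k + 1), v i
  set R := (∑ i ∈ Finset.Icc 1 k, 2 ^ (∑ j ∈ Finset.Icc (i + 1) (k + 1), v j) * 3 ^ (i - 1)) + 3 ^ k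
  have hR : R ≡ 2 ^ S [MOD 3] := (Nat.sum_mul_three_pow_modEq _ (by omega)).add
    (Nat.modEq_zero_iff_dvd.mpr (dvd_pow_self 3 (by omega)))
  have hRcop : R.Coprime 3 := by
    rw [Nat.Coprime, hR.gcd_eq]
    exact Nat.Coprime.pow_left S (by norm_num)
  obtain ⟨x, ⟨⟨hx4, hxn⟩, hx⟩, huniq⟩ := Nat.existsUnique_Ico_of_forall_iff_modEq
    (by positivity) 4 (Nat.exists_two_pow_add_modEq k S hRcop) (fun _ ↦ Nat.two_pow_add_modEq_iff)
  have hx2 : x % 2 = 0 := Nat.modEq_zero_two_of_two_pow_add_modEq hR hx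
  refine ⟨x, ⟨⟨hx4, by omega⟩, hx⟩, fun y ⟨⟨hy4, hyn⟩, hy⟩ ↦ huniq y ⟨⟨hy4, by omega⟩, hy⟩⟩

theorem stmt2 (b : ℕ) (hb : 2 ≤ b) (v : ℕ → ℕ)
    (hv : ∀ i, 2 ≤ i → i ≤ b → 1 ≤ v i ∧ v i ≤ 2 * 3 ^ (b - i)) :
    ∃! v1 : ℕ, (4 ≤ v1 ∧ v1 ≤ 2 * 3 ^ (b - 1) + 2) ∧
      2 ^ (v1 + ∑ i ∈ Finset.Icc 2 b, v i) ≡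
        (∑ i ∈ Finset.Icc 1 (b - 1), 2 ^ (∑ j ∈ Finset.Icc (i + 1) b, v j) * 3 ^ (i - 1)) +
          3 ^ (b - 1) [MOD 3 ^ b] :=
  stmt2_general b hb v
end

section
/- The number of tuples (v_1,...,v_b) with each v_i in {1,...,m} (m = 2·3^{b-1}) satisfying the admissibility congruence 2^{Σv_i} ≡ Σ_{i=1}^{b-1} 2^{Σ_{j>i} v_j}·3^{i-1} + 3^{b-1} (mod 3^b) equals m^{b-1} = 2^{b-1}·3^{(b-1)^2}. -/
/-!
Since `4 = 1 + 3` has order `3 ^ (b - 1)` modulo `3 ^ b` and `2` has even order (it does so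
modulo `3`), the order of `2` modulo `3 ^ b` is `m = 2 * 3 ^ (b - 1) = φ (3 ^ b)`: `2` is a
primitive root. The congruence reads `2 ^ v₁ * 2 ^ (v₂ + ⋯ + v_b) ≡ C (v₂, …, v_b)` with `C`
prime to `3`, so every tail `(v₂, …, v_b) ∈ {1, …, m} ^ (b - 1)` extends by exactly one
`v₁ ∈ {1, …, m}`.
-/

open Finset

theorem Nat.existsUnique_mem_Icc_modEq {m : ℕ} (hm : 0 < m) (k : ℕ) :
    ∃! x, x ∈ Icc 1 m ∧ x ≡ k [MOD m] := by
  have hx : (k + m - 1) % m + 1 ∈ Icc 1 m ∧ (k + m - 1) % m + 1 ≡ k [MOD m] := by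
    refine ⟨?_, ?_⟩
    · have := Nat.mod_lt (k + m - 1) hm
      rw [mem_Icc]; omega
    · calc (k + m - 1) % m + 1 ≡ k + m - 1 + 1 [MOD m] := (Nat.mod_modEq _ m).add_right 1
        _ = k + m := by omega
        _ ≡ k [MOD m] := Nat.add_modEq_right
  refine ⟨_, hx, fun y ⟨hy, hyk⟩ => (hyk.trans hx.2.symm).eq_of_abs_lt ?_⟩
  have := mem_Icc.mp hx.1
  rw [mem_Icc] at hy
  rw [abs_lt]; omega

theorem existsUnique_mem_Icc_pow_eq {G : Type*} [Group G] [Finite G] {g : G}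
    (hg : orderOf g = Nat.card G) (c : G) : ∃! x, x ∈ Icc 1 (orderOf g) ∧ g ^ x = c := by
  have hc : c ∈ Subgroup.zpowers g := by
    rw [(Subgroup.card_eq_iff_eq_top (Subgroup.zpowers g)).mp (by rw [Nat.card_zpowers, hg])]
    trivial
  obtain ⟨k, rfl⟩ := mem_powers_iff_mem_zpowers.mpr hc
  simp only [pow_eq_pow_iff_modEq]
  exact Nat.existsUnique_mem_Icc_modEq (orderOf_pos g) k

theorem ZMod.orderOf_two_mod_three_pow (n : ℕ) :
    orderOf (2 : ZMod (3 ^ (n + 1))) = 2 * 3 ^ n := by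
  have hsq : orderOf ((2 : ZMod (3 ^ (n + 1))) ^ 2) = 3 ^ n := by
    have := ZMod.orderOf_one_add_prime Nat.prime_three (by norm_num) n
    norm_num at this ⊢
    exact this
  have heven : 2 ∣ orderOf (2 : ZMod (3 ^ (n + 1))) := by
    have hmod3 : orderOf (2 : ZMod 3) = 2 :=
      orderOf_eq_prime (hp := ⟨Nat.prime_two⟩) (by decide) (by decide)
    rw [← hmod3]
    have := orderOf_map_dvd
      (ZMod.castHom (dvd_pow_self 3 n.succ_ne_zero) (ZMod 3)).toMonoidHom (2 : ZMod (3 ^ (n + 1)))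
    rwa [RingHom.toMonoidHom_eq_coe, MonoidHom.coe_coe, map_ofNat] at this
  rw [orderOf_pow' _ two_ne_zero, Nat.gcd_eq_right heven] at hsq
  omega

theorem existsUnique_two_pow_mul_modEq (n a c : ℕ) (ha : ¬ 3 ∣ a) (hc : ¬ 3 ∣ c) :
    ∃! x, x ∈ Icc 1 (2 * 3 ^ n) ∧ 2 ^ x * a ≡ c [MOD 3 ^ (n + 1)] := by
  have hcop {k : ℕ} (hk : ¬ 3 ∣ k) : k.Coprime (3 ^ (n + 1)) :=
    .pow_right _ ((Nat.Prime.coprime_iff_not_dvd Nat.prime_three).mpr hk).symm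
  set u := ZMod.unitOfCoprime 2 (hcop (by norm_num))
  set A := ZMod.unitOfCoprime a (hcop ha)
  set C := ZMod.unitOfCoprime c (hcop hc)
  have hu : orderOf u = 2 * 3 ^ n := by
    rw [← orderOf_units, ZMod.coe_unitOfCoprime]
    exact_mod_cast ZMod.orderOf_two_mod_three_pow n
  have hcard : Nat.card (ZMod (3 ^ (n + 1)))ˣ = 2 * 3 ^ n := by
    rw [Nat.card_eq_fintype_card, ZMod.card_units_eq_totient,
      Nat.totient_prime_pow_succ Nat.prime_three]
    ring
  have hiff (x : ℕ) : 2 ^ x * a ≡ c [MOD 3 ^ (n + 1)] ↔ u ^ x = C * A⁻¹ := by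
    rw [eq_mul_inv_iff_mul_eq, Units.ext_iff, ← ZMod.natCast_eq_natCast_iff]
    simp [u, A, C]
  simpa only [hiff, hu] using existsUnique_mem_Icc_pow_eq (hu.trans hcard.symm) (C * A⁻¹)

theorem card_filter_piFinset_const_succ {α : Type*} [DecidableEq α] {n : ℕ} (s : Finset α)
    (P : (Fin (n + 1) → α) → Prop) [DecidablePred P]
    (h : ∀ w ∈ Fintype.piFinset fun _ : Fin n => s, ∃! x, x ∈ s ∧ P (Fin.cons x w)) :
    ((Fintype.piFinset fun _ => s).filter P).card = s.card ^ n := by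
  rw [← Fintype.card_piFinset_const]
  refine card_bij (fun v _ => Fin.tail v) ?_ ?_ ?_
  · intro v hv
    simp only [mem_filter, Fintype.mem_piFinset] at hv ⊢
    exact fun i => hv.1 i.succ
  · intro v₁ h₁ v₂ h₂ htail
    simp only [mem_filter, Fintype.mem_piFinset] at h₁ h₂
    obtain ⟨x, -, huniq⟩ := h (Fin.tail v₁) (Fintype.mem_piFinset.mpr fun i => h₁.1 i.succ)
    have hhead₁ : v₁ 0 = x := huniq _ ⟨h₁.1 0, by rw [Fin.cons_self_tail]; exact h₁.2⟩
    have hhead₂ : v₂ 0 = x := huniq _ ⟨h₂.1 0, by rw [htail, Fin.cons_self_tail]; exact h₂.2⟩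
    rw [← Fin.cons_self_tail v₁, ← Fin.cons_self_tail v₂, hhead₁, hhead₂, htail]
  · intro w hw
    obtain ⟨x, ⟨hx, hP⟩, -⟩ := h w hw
    refine ⟨Fin.cons x w, ?_, Fin.tail_cons (α := fun _ => α) x w⟩
    simp only [mem_filter, Fintype.mem_piFinset] at hw ⊢
    exact ⟨Fin.cases hx hw, hP⟩

/-- The right-hand side of the admissibility congruence, as a function of the tail
`(v₂, …, v_b)`. -/
def tailOffset {n : ℕ} (w : Fin n → ℕ) : ℕ :=
  (∑ k ∈ range n, 2 ^ (∑ i ∈ univ.filter fun i : Fin n => k ≤ (i : ℕ), w i) * 3 ^ k) + 3 ^ n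

theorem three_not_dvd_two_pow (t : ℕ) : ¬ 3 ∣ 2 ^ t := fun h => by
  have := Nat.prime_three.dvd_of_dvd_pow h
  omega

theorem three_not_dvd_tailOffset : ∀ {n : ℕ} (w : Fin n → ℕ), ¬ 3 ∣ tailOffset w
  | 0, _ => by simp [tailOffset]
  | n + 1, w => by
    have h3 : 3 ∣ (∑ k ∈ range n,
        2 ^ (∑ i ∈ univ.filter fun i : Fin (n + 1) => k + 1 ≤ (i : ℕ), w i) * 3 ^ (k + 1)) +
          3 ^ (n + 1) :=
      dvd_add (dvd_sum fun k _ => dvd_mul_of_dvd_right (dvd_pow_self 3 k.succ_ne_zero) _)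
        (dvd_pow_self 3 n.succ_ne_zero)
    rw [tailOffset, sum_range_succ', pow_zero, mul_one, add_right_comm, Nat.dvd_add_right h3]
    exact three_not_dvd_two_pow _

theorem sum_filter_succ_le_eq_sum_filter_le {M : Type*} [AddCommMonoid M] {n : ℕ} (k : ℕ)
    (v : Fin (n + 1) → M) :
    ∑ j ∈ univ.filter (fun j : Fin (n + 1) => k + 1 ≤ (j : ℕ)), v j
      = ∑ i ∈ univ.filter (fun i : Fin n => k ≤ (i : ℕ)), v i.succ := by
  simp [sum_filter, Fin.sum_univ_succ]

theorem stmt3 (b : ℕ) (hb : 1 ≤ b) (m : ℕ) (hm : m = 2 * 3 ^ (b - 1)) :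
    ((Fintype.piFinset fun _ : Fin b => Finset.Icc 1 m).filter fun v : Fin b → ℕ =>
        2 ^ (∑ i, v i) ≡
          (∑ k ∈ Finset.range (b - 1),
              2 ^ (∑ j ∈ Finset.univ.filter fun j : Fin b => k + 1 ≤ (j : ℕ), v j) * 3 ^ k) +
            3 ^ (b - 1) [MOD 3 ^ b]).card = m ^ (b - 1) := by
  obtain ⟨n, rfl⟩ : ∃ n, b = n + 1 := ⟨b - 1, by omega⟩
  subst hm
  simp only [Nat.add_sub_cancel]
  refine (card_filter_piFinset_const_succ _ _ fun w _ => ?_).trans (by simp)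
  simp only [Fin.sum_cons, pow_add, sum_filter_succ_le_eq_sum_filter_le, Fin.cons_succ]
  exact existsUnique_two_pow_mul_modEq n _ (tailOffset w) (three_not_dvd_two_pow _)
    (three_not_dvd_tailOffset w)
end

section
/- If a ≤ m + b - 1, then Σ_{j=b}^{a} ⟨b choose j⟩_m = C(a, b), where ⟨b choose j⟩_m is the number of compositions of j into b parts each in {1,...,m}. -/
/-!
Subtracting one from every part turns a composition of `j` into `b` parts from `{1,…,m}` into a
weak composition of `j - b` into `b` parts; when `j ≤ m + b - 1` the upper bound `m` on the parts
is automatic. By stars and bars there are `C(j - 1, b - 1)` of them, and the hockey-stick identity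
sums these over `b ≤ j ≤ a` to `C(a, b)`.
-/

/-- `extBinom b a m` is the number of compositions of `a` into exactly `b` parts,
each part lying in `{1,...,m}`. -/
def extBinom (b : ℕ) (a : ℤ) (m : ℕ) : ℕ :=
  ((Fintype.piFinset fun _ : Fin b => Finset.Icc 1 m).filter fun v : Fin b → ℕ =>
    (∑ i, (v i : ℤ)) = a).card

open Finset

theorem Finset.card_piAntidiag_univ {ι : Type*} [Fintype ι] [DecidableEq ι] (n : ℕ) :
    #(piAntidiag (univ : Finset ι) n) = (Fintype.card ι + n - 1).choose n := by
  rw [← map_sym_eq_piAntidiag, card_map, sym_univ, card_univ, Sym.card_sym_eq_choose]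

theorem extBinom_eq_card_filter_sum_eq (b j m : ℕ) :
    extBinom b (j : ℤ) m =
      #{v ∈ Fintype.piFinset fun _ : Fin b => Icc 1 m | ∑ i, v i = j} := by
  simp only [extBinom, ← Nat.cast_sum, Nat.cast_inj]

theorem extBinom_eq_card_piAntidiag {b j m : ℕ} (hbj : b ≤ j) (hjm : j ≤ m + b - 1) :
    extBinom b (j : ℤ) m = #(piAntidiag (univ : Finset (Fin b)) (j - b)) := by
  rw [extBinom_eq_card_filter_sum_eq]
  refine card_nbij' (· - 1) (· + 1) ?_ ?_ ?_ ?_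
  · intro v hv
    simp only [coe_filter, Fintype.mem_piFinset, mem_Icc, Set.mem_ofPred_eq] at hv
    have hsub : ∑ i, (v i - 1) = ∑ i, v i - b := by
      rw [sum_tsub_distrib _ fun i _ => (hv.1 i).1]
      simp
    simp [hsub, hv.2]
  · intro w hw
    replace hw : ∑ i, w i = j - b := (mem_piAntidiag.1 hw).1
    have hle (i : Fin b) : w i ≤ j - b :=
      hw ▸ single_le_sum (fun _ _ => Nat.zero_le _) (mem_univ i)
    simp only [coe_filter, Fintype.mem_piFinset, mem_Icc, Set.mem_ofPred_eq, Pi.add_apply,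
      Pi.one_apply, sum_add_distrib, hw, sum_const, card_univ, Fintype.card_fin, smul_eq_mul]
    refine ⟨fun i => ⟨Nat.le_add_left 1 (w i), ?_⟩, ?_⟩
    · have := hle i; have := i.pos; omega
    · omega
  · intro v hv
    simp only [coe_filter, Fintype.mem_piFinset, mem_Icc, Set.mem_ofPred_eq] at hv
    funext i
    exact Nat.sub_add_cancel (hv.1 i).1
  · intro w _
    simp

theorem extBinom_eq_choose {b j m : ℕ} (hb : 1 ≤ b) (hbj : b ≤ j) (hjm : j ≤ m + b - 1) :
    extBinom b (j : ℤ) m = (j - 1).choose (b - 1) := by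
  rw [extBinom_eq_card_piAntidiag hbj hjm, card_piAntidiag_univ, Fintype.card_fin,
    ← Nat.choose_symm (by omega)]
  congr 1 <;> omega

theorem Nat.sum_Icc_choose_pred (a c : ℕ) :
    ∑ j ∈ Icc (c + 1) a, (j - 1).choose c = a.choose (c + 1) := by
  induction a with
  | zero => simp
  | succ a ih =>
    rcases Nat.lt_or_ge a c with hac | hca
    · rw [Icc_eq_empty (by omega), sum_empty, Nat.choose_eq_zero_of_lt (by omega)]
    · rw [sum_Icc_succ_top (by omega), ih, Nat.add_sub_cancel, Nat.choose_succ_succ', add_comm]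

theorem stmt6_general (a b m : ℕ) (hb : 1 ≤ b)
    (h : a ≤ m + b - 1) :
    ∑ j ∈ Finset.Icc b a, extBinom b (j : ℤ) m = a.choose b := by
  obtain ⟨c, rfl⟩ : ∃ c, b = c + 1 := ⟨b - 1, by omega⟩
  calc ∑ j ∈ Icc (c + 1) a, extBinom (c + 1) (j : ℤ) m
      = ∑ j ∈ Icc (c + 1) a, (j - 1).choose c := by
        refine sum_congr rfl fun j hj => ?_
        rw [mem_Icc] at hj
        exact extBinom_eq_choose hb hj.1 (hj.2.trans h)
    _ = a.choose (c + 1) := Nat.sum_Icc_choose_pred a c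

theorem stmt6 (a b m : ℕ) (ha : 1 ≤ a) (hb : 1 ≤ b) (hm : 1 ≤ m)
    (h : a ≤ m + b - 1) :
    ∑ j ∈ Finset.Icc b a, extBinom b (j : ℤ) m = a.choose b :=
  stmt6_general a b m hb h
end

section
/- The real equation x - (1/3)·x^{log₂ 3} - 1 = 0 has exactly two positive real solutions: x = 2 and x = 4. -/
open Real Set

private lemma hL1 : 1 < Real.logb 2 3 := by
  rw [Real.lt_logb_iff_rpow_lt (by norm_num) (by norm_num), Real.rpow_one]
  norm_num

private lemma h2L : (2:ℝ) ^ Real.logb 2 3 = 3 :=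
  Real.rpow_logb (by norm_num) (by norm_num) (by norm_num)

private lemma h4L : (4:ℝ) ^ Real.logb 2 3 = 9 := by
  have h4 : (4:ℝ) = (2:ℝ) ^ (2:ℝ) := by
    rw [show (2:ℝ) = ((2:ℕ):ℝ) by norm_num, Real.rpow_natCast]; norm_num
  rw [h4, ← Real.rpow_mul (by norm_num : (0:ℝ) ≤ 2), mul_comm,
    Real.rpow_mul (by norm_num : (0:ℝ) ≤ 2), h2L,
    show (2:ℝ) = ((2:ℕ):ℝ) by norm_num, Real.rpow_natCast]
  norm_num

private lemma Fconvex :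
    StrictConvexOn ℝ (Ici (0:ℝ))
      (fun x : ℝ => (1/3) * x ^ Real.logb 2 3 + 1 - x) := by
  refine ⟨convex_Ici 0, fun x hx y hy hxy a b ha hb hab => ?_⟩
  have key := (strictConvexOn_rpow hL1).2 hx hy hxy ha hb hab
  simp only [smul_eq_mul] at key ⊢
  nlinarith [key]

theorem stmt10 (x : ℝ) (hx : 0 < x) :
    x - (1 / 3) * x ^ Real.logb 2 3 - 1 = 0 ↔ x = 2 ∨ x = 4 := by
  constructor
  · intro h
    have hFx : 1 / 3 * x ^ Real.logb 2 3 + 1 - x = 0 := by linarith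
    by_contra hne
    push_neg at hne
    obtain ⟨hne2, hne4⟩ := hne
    rcases lt_trichotomy x 2 with hlt | heq | hgt
    · have h2mem : (2:ℝ) ∈ openSegment ℝ x 4 := by
        rw [openSegment_eq_Ioo (by linarith : x < 4)]
        exact ⟨hlt, by norm_num⟩
      have key := Fconvex.lt_on_openSegment (le_of_lt hx) (by norm_num)
        (by linarith : x ≠ (4:ℝ)) h2mem
      rw [h2L, h4L, hFx] at key
      norm_num at key
    · exact hne2 heq
    rcases lt_trichotomy x 4 with hlt4 | heq4 | hgt4
    · have hxmem : x ∈ openSegment ℝ (2:ℝ) 4 := by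
        rw [openSegment_eq_Ioo (by norm_num : (2:ℝ) < 4)]
        exact ⟨hgt, hlt4⟩
      have key := Fconvex.lt_on_openSegment (by norm_num) (by norm_num)
        (by norm_num : (2:ℝ) ≠ 4) hxmem
      rw [h2L, h4L, hFx] at key
      norm_num at key
    · exact hne4 heq4
    · have h4mem : (4:ℝ) ∈ openSegment ℝ (2:ℝ) x := by
        rw [openSegment_eq_Ioo (by linarith : (2:ℝ) < x)]
        exact ⟨by norm_num, hgt4⟩
      have key := Fconvex.lt_on_openSegment (by norm_num) (le_of_lt hx)
        (by linarith : (2:ℝ) ≠ x) h4mem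
      rw [h2L, h4L, hFx] at key
      norm_num at key
  · rintro (rfl | rfl)
    · rw [h2L]; ring
    · rw [h4L]; ring
end

section
/- For every real x > 16, (3/2)·Σ_{b=0}^{∞} 3^{-b}·C(b·log₂3 + log₂x − 4, b) − 1/2 = (3/16)·x/(2 − log₂3) − 1/2 ≈ 0.45177·x − 1/2. -/
/-- Generalized binomial coefficient `C(x, n) = x(x-1)⋯(x-n+1)/n!` for real `x`. -/
noncomputable def gchoose (x : ℝ) (n : ℕ) : ℝ :=
  (∏ i ∈ Finset.range n, (x - i)) / n.factorial

namespace S13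
open Finset

noncomputable def al : ℝ := Real.logb 2 3

lemma rpow_frac_pow {a : ℝ} (ha : 0 < a) (b n : ℕ) (hn : (n:ℝ) ≠ 0) :
    (a ^ ((b:ℝ)/(n:ℝ))) ^ n = a ^ b := by
  rw [← Real.rpow_natCast (a ^ ((b:ℝ)/(n:ℝ))) n, ← Real.rpow_mul ha.le,
    div_mul_cancel₀ _ hn, Real.rpow_natCast]

lemma rpow_frac_lt {a c : ℝ} {b n : ℕ} (ha : 0 < a) (hc : 0 ≤ c) (hn : 0 < n)
    (h : a ^ b < c ^ n) : a ^ ((b:ℝ)/(n:ℝ)) < c := by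
  apply lt_of_pow_lt_pow_left₀ n hc
  rw [rpow_frac_pow ha b n (by exact_mod_cast hn.ne')]
  exact h

lemma lt_rpow_frac {a c : ℝ} {b n : ℕ} (ha : 0 < a) (hn : 0 < n)
    (h : c ^ n < a ^ b) : c < a ^ ((b:ℝ)/(n:ℝ)) := by
  apply lt_of_pow_lt_pow_left₀ n (Real.rpow_pos_of_pos ha _).le
  rw [rpow_frac_pow ha b n (by exact_mod_cast hn.ne')]
  exact h

lemma al_lb : (19:ℝ)/12 < al := by
  rw [al, Real.lt_logb_iff_rpow_lt (by norm_num) (by norm_num)]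
  have : ((19:ℝ)/12) = ((19:ℕ):ℝ)/((12:ℕ):ℝ) := by norm_num
  rw [this]
  exact rpow_frac_lt (by norm_num) (by norm_num) (by norm_num) (by norm_num)

lemma al_ub : al < 8/5 := by
  rw [al, Real.logb_lt_iff_lt_rpow (by norm_num) (by norm_num)]
  have : ((8:ℝ)/5) = ((8:ℕ):ℝ)/((5:ℕ):ℝ) := by norm_num
  rw [this]
  exact lt_rpow_frac (by norm_num) (by norm_num) (by norm_num)

lemma one_lt_al : 1 < al := lt_trans (by norm_num) al_lb
lemma al_lt_two : al < 2 := lt_trans al_ub (by norm_num)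
lemma two_rpow_al : (2:ℝ) ^ al = 3 := Real.rpow_logb (by norm_num) (by norm_num) (by norm_num)

lemma gchoose_zero (x : ℝ) : gchoose x 0 = 1 := by simp [gchoose]

lemma prod_shift (x : ℝ) (n : ℕ) :
    ∏ i ∈ range (n+1), (x - i) = x * ∏ i ∈ range n, (x - 1 - i) := by
  rw [Finset.prod_range_succ']
  simp only [Nat.cast_zero, sub_zero, Nat.cast_add, Nat.cast_one]
  rw [mul_comm]
  congr 1
  apply Finset.prod_congr rfl
  intro i _
  ring_nf

lemma I2 (x : ℝ) (n : ℕ) : (n+1 : ℝ) * gchoose x (n+1) = x * gchoose (x-1) n := by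
  rw [gchoose, gchoose, prod_shift, Nat.factorial_succ]
  push_cast
  have : (n.factorial : ℝ) ≠ 0 := by positivity
  field_simp

lemma I6 (x : ℝ) (n : ℕ) : x * gchoose (x-1) n = (x - n) * gchoose x n := by
  rw [gchoose, gchoose]
  have h1 := prod_shift x n
  rw [Finset.prod_range_succ] at h1
  have : (n.factorial : ℝ) ≠ 0 := by positivity
  field_simp
  nlinarith [h1]

lemma pascal (x : ℝ) (n : ℕ) :
    gchoose x (n+1) = gchoose (x-1) (n+1) + gchoose (x-1) n := by
  rw [gchoose, gchoose, gchoose, prod_shift, Finset.prod_range_succ, Nat.factorial_succ]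
  push_cast
  have : (n.factorial : ℝ) ≠ 0 := by positivity
  field_simp
  ring

noncomputable def A (p : ℝ) : ℕ → ℝ
  | 0 => 1
  | (k+1) => (p/(k+1)) * gchoose (p + (k+1)*al - 1) k

@[simp] lemma A_zero (p : ℝ) : A p 0 = 1 := rfl
lemma A_succ (p : ℝ) (k : ℕ) : A p (k+1) = (p/(k+1)) * gchoose (p + (k+1)*al - 1) k := rfl
@[simp] lemma A_zero_left (k : ℕ) : A 0 (k+1) = 0 := by simp [A_succ]

/-- Pascal-type recurrence for the Rothe polynomials. -/
lemma PA (p : ℝ) (k : ℕ) : A p (k+1) = A (p-1) (k+1) + A (p+al-1) k := by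
  cases k with
  | zero => simp [A_succ, gchoose_zero]
  | succ k =>
    rw [A_succ, A_succ, A_succ]
    push_cast
    have h1 : gchoose (p + (↑k+2)*al - 1) (k+1)
        = gchoose (p + (↑k+2)*al - 1 - 1) (k+1) + gchoose (p + (↑k+2)*al - 1 - 1) k :=
      pascal _ k
    have h2 : ((k:ℝ)+1) * gchoose (p + (↑k+2)*al - 1) (k+1)
        = (p + (↑k+2)*al - 1) * gchoose (p + (↑k+2)*al - 1 - 1) k := I2 _ k
    rw [show p + (↑k+1+1)*al - 1 = p + (↑k+2)*al - 1 by ring,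
      show p - 1 + (↑k+1+1)*al - 1 = p + (↑k+2)*al - 1 - 1 by ring,
      show p + al - 1 + (↑k+1)*al - 1 = p + (↑k+2)*al - 1 - 1 by ring]
    have hk1 : ((k:ℝ)+1) ≠ 0 := by positivity
    have hk2 : ((k:ℝ)+2) ≠ 0 := by positivity
    linear_combination (norm := (field_simp; ring))
      ((p-1)/(↑k+2)) * h1 + (1/((↑k+2)*(↑k+1))) * h2

/-- `A 1 (k+1) = A al k`. -/
lemma A_one_succ (k : ℕ) : A 1 (k+1) = A al k := by
  cases k with
  | zero => simp [A_succ, gchoose_zero]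
  | succ k =>
    rw [A_succ, A_succ]
    push_cast
    have h2 : ((k:ℝ)+1) * gchoose ((↑k+2)*al) (k+1)
        = ((↑k+2)*al) * gchoose ((↑k+2)*al - 1) k := I2 _ k
    rw [show (1:ℝ) + (↑k+1+1)*al - 1 = (↑k+2)*al by ring,
      show al + (↑k+1)*al - 1 = (↑k+2)*al - 1 by ring]
    have hk1 : ((k:ℝ)+1) ≠ 0 := by positivity
    have hk2 : ((k:ℝ)+2) ≠ 0 := by positivity
    field_simp
    linear_combination h2

/-- `B q (m+1) = A q (m+1) + al * B (q+al-1) m` where `B q m = gchoose (q + m*al) m`. -/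
lemma I3 (q : ℝ) (m : ℕ) :
    gchoose (q + (m+1)*al) (m+1) = A q (m+1) + al * gchoose ((q+al-1) + m*al) m := by
  rw [A_succ]
  have h2 : ((m:ℝ)+1) * gchoose (q + (↑m+1)*al) (m+1)
      = (q + (↑m+1)*al) * gchoose (q + (↑m+1)*al - 1) m := I2 _ m
  rw [show q + ((m:ℝ)+1)*al - 1 = q + (↑m+1)*al - 1 by ring,
    show q + al - 1 + ↑m*al = q + (↑m+1)*al - 1 by ring]
  have hm : ((m:ℝ)+1) ≠ 0 := by positivity
  field_simp
  linear_combination h2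

/-- `(1-al) * C(t+1+n*al, n) + al * C(t+n*al, n) = A (t+1) n`, for `t+1+n*al ≠ 0`. -/
lemma I7 (t : ℝ) (n : ℕ) (hne : t + 1 + n*al ≠ 0) :
    (1-al) * gchoose (t + 1 + n*al) n + al * gchoose (t + n*al) n = A (t+1) n := by
  cases n with
  | zero => simp [gchoose_zero]
  | succ n =>
    rw [A_succ]
    push_cast at hne ⊢
    have h1 : gchoose (t + 1 + (↑n+1)*al) (n+1)
        = gchoose (t + 1 + (↑n+1)*al - 1) (n+1) + gchoose (t + 1 + (↑n+1)*al - 1) n :=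
      pascal _ n
    have h2 : ((n:ℝ)+1) * gchoose (t + 1 + (↑n+1)*al) (n+1)
        = (t + 1 + (↑n+1)*al) * gchoose (t + 1 + (↑n+1)*al - 1) n := I2 _ n
    rw [show t + (↑n+1)*al = t + 1 + (↑n+1)*al - 1 by ring]
    have hm : ((n:ℝ)+1) ≠ 0 := by positivity
    linear_combination (norm := (field_simp; ring)) (-al) * h1 + (1/(↑n+1)) * h2
noncomputable def Bg (q : ℝ) (m : ℕ) : ℝ := gchoose (q + m*al) m

@[simp] lemma Bg_zero (q : ℝ) : Bg q 0 = 1 := by simp [Bg, gchoose_zero]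

lemma I3' (q : ℝ) (m : ℕ) : Bg q (m+1) = A q (m+1) + al * Bg (q+al-1) m := by
  have := I3 q m
  rw [Bg, Bg]
  push_cast
  convert this using 3

/-- Polynomial representing `q ↦ A q m`. -/
noncomputable def Apol : ℕ → Polynomial ℝ
  | 0 => 1
  | (k+1) => Polynomial.C (1/((k+1) * k.factorial) : ℝ) * Polynomial.X *
      ∏ i ∈ range k, (Polynomial.X + Polynomial.C ((k+1)*al - 1 - i))

lemma Apol_eval (m : ℕ) (q : ℝ) : (Apol m).eval q = A q m := by
  cases m with
  | zero => simp [Apol]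
  | succ k =>
    rw [Apol, A_succ, gchoose]
    simp only [Polynomial.eval_mul, Polynomial.eval_C, Polynomial.eval_X,
      Polynomial.eval_prod, Polynomial.eval_add]
    push_cast
    have h1 : ∏ i ∈ range k, (q + (((k:ℝ)+1)*al - 1 - (i:ℝ))) =
        ∏ i ∈ range k, (q + ((k:ℝ)+1)*al - 1 - (i:ℝ)) := by
      apply Finset.prod_congr rfl; intro i _; ring
    rw [h1]
    have : (k.factorial : ℝ) ≠ 0 := by positivity
    field_simp

lemma poly_zero_of_periodic (P : Polynomial ℝ) (h : ∀ q : ℝ, P.eval q = P.eval (q-1))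
    (h0 : P.eval 0 = 0) : P = 0 := by
  have hn : ∀ m : ℕ, P.eval (m:ℝ) = 0 := by
    intro m
    induction m with
    | zero => simpa using h0
    | succ m ih =>
      have h2 := h ((m:ℝ)+1)
      rw [show ((m:ℝ)+1-1) = (m:ℝ) by ring, ih] at h2
      push_cast
      exact h2
  apply Polynomial.eq_zero_of_infinite_isRoot
  exact Set.infinite_of_injective_forall_mem (f := fun m : ℕ => (m:ℝ))
    (fun a b hab => Nat.cast_injective hab) hn

/-- Rothe's convolution identity. -/
lemma R1 : ∀ n : ℕ, ∀ p q : ℝ,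
    ∑ k ∈ range (n+1), A p k * A q (n-k) = A (p+q) n := by
  intro n
  induction n with
  | zero => intro p q; simp
  | succ n ih =>
    intro p q₀
    set P : Polynomial ℝ :=
      (∑ k ∈ range (n+2), Polynomial.C (A p k) * Apol (n+1-k)) -
        (Apol (n+1)).comp (Polynomial.X + Polynomial.C p) with hP
    have hPe : ∀ q : ℝ, P.eval q =
        (∑ k ∈ range (n+2), A p k * A q (n+1-k)) - A (p+q) (n+1) := by
      intro q
      simp [hP, Polynomial.eval_finset_sum, Apol_eval, Polynomial.eval_comp, add_comm q p]
    have hstep : ∀ q : ℝ, P.eval q = P.eval (q-1) := by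
      intro q
      rw [hPe, hPe]
      have key : (∑ k ∈ range (n+2), A p k * A q (n+1-k)) -
          (∑ k ∈ range (n+2), A p k * A (q-1) (n+1-k))
          = A (p+q) (n+1) - A (p+q-1) (n+1) := by
        rw [← Finset.sum_sub_distrib]
        have e1 : ∀ k ∈ range (n+2), A p k * A q (n+1-k) - A p k * A (q-1) (n+1-k)
            = if k ≤ n then A p k * A (q+al-1) (n-k) else 0 := by
          intro k hk
          simp only [mem_range] at hk
          by_cases hkn : k ≤ n
          · have h1 : n+1-k = (n-k)+1 := by omega
            rw [h1, if_pos hkn, ← mul_sub]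
            congr 1
            have := PA q (n-k)
            linarith [this]
          · have hk1 : k = n+1 := by omega
            subst hk1
            simp
        rw [Finset.sum_congr rfl e1, Finset.sum_ite, Finset.sum_const_zero, add_zero]
        have hfilter : Finset.filter (fun k => k ≤ n) (range (n+2)) = range (n+1) := by
          ext k; simp [Nat.lt_succ_iff]; omega
        rw [hfilter]
        have := ih p (q+al-1)
        rw [this]
        have hpa := PA (p+q) n
        have : p + (q+al-1) = p+q+al-1 := by ring
        rw [this]
        linarith [hpa]
      have e : p+(q-1) = p+q-1 := by ring
      rw [e]
      linarith [key]
    have h0 : P.eval 0 = 0 := by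
      rw [hPe]
      have : ∀ k ∈ range (n+1), A p k * A 0 (n+1-k) = 0 := by
        intro k hk
        simp only [mem_range] at hk
        have h1 : n+1-k = (n-k)+1 := by omega
        rw [h1, A_zero_left, mul_zero]
      rw [Finset.sum_range_succ, Finset.sum_congr rfl this]
      simp
    have hz := poly_zero_of_periodic P hstep h0
    have := hPe q₀
    rw [hz] at this
    simp only [Polynomial.eval_zero] at this
    linarith [this]

/-- Rothe–Hagen type convolution with the `Bg` family. -/
lemma R2 : ∀ n : ℕ, ∀ p q : ℝ,
    ∑ k ∈ range (n+1), A p k * Bg q (n-k) = Bg (p+q) n := by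
  intro n
  induction n with
  | zero => intro p q; simp
  | succ n ih =>
    intro p q
    have e1 : ∀ k ∈ range (n+1), A p k * Bg q (n+1-k)
        = A p k * A q (n+1-k) + al * (A p k * Bg (q+al-1) (n-k)) := by
      intro k hk
      simp only [mem_range] at hk
      have h1 : n+1-k = (n-k)+1 := by omega
      rw [h1, I3' q (n-k)]
      ring
    rw [Finset.sum_range_succ, Finset.sum_congr rfl e1, Finset.sum_add_distrib,
      ← Finset.mul_sum, ih p (q+al-1)]
    have h2 : p + (q+al-1) = (p+q)+al-1 := by ring
    have h3 : n+1-(n+1) = 0 := by omega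
    rw [h2, h3, Bg_zero, mul_one]
    have h4 : ∑ k ∈ range (n+2), A p k * A q (n+1-k)
        = (∑ k ∈ range (n+1), A p k * A q (n+1-k)) + A p (n+1) := by
      rw [Finset.sum_range_succ]; simp
    have h5 := R1 (n+1) p q
    rw [h4] at h5
    rw [I3' (p+q) n]
    linarith [h5]

/-! ### Summability -/

lemma gchoose_pos {x : ℝ} {n : ℕ} (h : (n:ℝ) - 1 < x) : 0 < gchoose x n := by
  rw [gchoose]
  apply div_pos
  · apply Finset.prod_pos
    intro i hi
    simp only [mem_range] at hi
    have : (i:ℝ) ≤ (n:ℝ) - 1 := by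
      have : (i:ℝ) + 1 ≤ n := by exact_mod_cast hi
      linarith
    linarith
  · positivity

lemma gchoose_mono {x y : ℝ} (n : ℕ) (h1 : (n:ℝ) - 1 ≤ x) (hxy : x ≤ y) :
    gchoose x n ≤ gchoose y n := by
  rw [gchoose, gchoose]
  have hp : ∀ i ∈ range n, (0:ℝ) ≤ x - i ∧ x - i ≤ y - i := by
    intro i hi
    simp only [mem_range] at hi
    have : (i:ℝ) + 1 ≤ n := by exact_mod_cast hi
    constructor <;> linarith
  have := Finset.prod_le_prod (fun i hi => (hp i hi).1) (fun i hi => (hp i hi).2)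
  apply div_le_div_of_nonneg_right this (by positivity)

lemma gchoose_natCast {N n : ℕ} (h : n ≤ N) : gchoose (N:ℝ) n = N.choose n := by
  rw [gchoose]
  have h1 : ∏ i ∈ range n, ((N:ℝ) - i) = (N.descFactorial n : ℝ) := by
    rw [Nat.descFactorial_eq_prod_range]
    push_cast
    apply Finset.prod_congr rfl
    intro i hi
    simp only [mem_range] at hi
    have : i ≤ N := le_trans (le_of_lt hi) h
    push_cast [this]
    ring
  rw [h1, Nat.descFactorial_eq_factorial_mul_choose]
  push_cast
  field_simp

lemma choose_le_est {N n : ℕ} (h : n ≤ N) :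
    (N.choose n : ℝ) ≤ (8/5)^n * (8/3)^(N-n) := by
  have key : ((5:ℝ)/8)^n * ((3:ℝ)/8)^(N-n) * N.choose n ≤ 1 := by
    have expand := add_pow ((5:ℝ)/8) ((3:ℝ)/8) N
    norm_num at expand
    calc ((5:ℝ)/8)^n * ((3:ℝ)/8)^(N-n) * N.choose n
        ≤ ∑ k ∈ range (N+1), ((5:ℝ)/8)^k * ((3:ℝ)/8)^(N-k) * N.choose k := by
          apply Finset.single_le_sum (f := fun k => ((5:ℝ)/8)^k * ((3:ℝ)/8)^(N-k) * (N.choose k:ℝ))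
          · intro k _; positivity
          · simp only [mem_range]; omega
      _ = 1 := expand.symm
  have h5 : (0:ℝ) < ((5:ℝ)/8)^n := by positivity
  have h3 : (0:ℝ) < ((3:ℝ)/8)^(N-n) := by positivity
  have e1 : ((8:ℝ)/5)^n = (((5:ℝ)/8)^n)⁻¹ := by rw [← inv_pow]; norm_num
  have e2 : ((8:ℝ)/3)^(N-n) = (((3:ℝ)/8)^(N-n))⁻¹ := by rw [← inv_pow]; norm_num
  rw [e1, e2]
  calc (N.choose n : ℝ)
      = (((5:ℝ)/8)^n * ((3:ℝ)/8)^(N-n) * N.choose n) * ((((5:ℝ)/8)^n)⁻¹ * (((3:ℝ)/8)^(N-n))⁻¹) := by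
        field_simp
    _ ≤ 1 * ((((5:ℝ)/8)^n)⁻¹ * (((3:ℝ)/8)^(N-n))⁻¹) := by
        apply mul_le_mul_of_nonneg_right key (by positivity)
    _ = (((5:ℝ)/8)^n)⁻¹ * (((3:ℝ)/8)^(N-n))⁻¹ := one_mul _

noncomputable def hseq (t : ℝ) (n : ℕ) : ℝ := gchoose (t + n*al) n / 3^n

lemma hseq_pos {t : ℝ} (ht : 0 ≤ t) (n : ℕ) : 0 < hseq t n := by
  apply div_pos _ (by positivity)
  apply gchoose_pos
  nlinarith [one_lt_al, Nat.cast_nonneg (α := ℝ) n]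

lemma hseq_le {t : ℝ} (ht : 0 ≤ t) (n : ℕ) :
    hseq t n ≤ (8/3:ℝ)^(t+1) * (962/1000:ℝ)^n := by
  have hal1 := one_lt_al
  have hal2 := al_ub
  have hn : (0:ℝ) ≤ (n:ℝ) := Nat.cast_nonneg n
  set y : ℝ := t + n*al with hy
  have hy0 : 0 ≤ y := by nlinarith
  set N : ℕ := ⌈y⌉₊ with hN
  have hyN : y ≤ N := Nat.le_ceil y
  have hNy : (N:ℝ) < y + 1 := Nat.ceil_lt_add_one hy0
  have hnN : n ≤ N := by
    have : (n:ℝ) ≤ (N:ℝ) := by nlinarith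
    exact_mod_cast this
  have step1 : gchoose y n ≤ (N.choose n : ℝ) := by
    rw [← gchoose_natCast hnN]
    apply gchoose_mono n _ hyN
    have : (n:ℝ) ≤ y := by nlinarith
    linarith
  have step2 := choose_le_est hnN
  have step3 : ((8:ℝ)/3)^(N-n) ≤ (8/3:ℝ)^(t+1) * (1803/1000:ℝ)^n := by
    have e1 : ((8:ℝ)/3)^(N-n) = ((8:ℝ)/3)^(((N-n:ℕ)):ℝ) := by
      rw [Real.rpow_natCast]
    have e2 : (((N-n:ℕ)):ℝ) ≤ (t+1) + (3/5)*n := by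
      have : (((N-n:ℕ)):ℝ) = (N:ℝ) - n := by
        push_cast [hnN]; ring
      rw [this]
      nlinarith
    have e3 : ((8:ℝ)/3)^(((N-n:ℕ)):ℝ) ≤ (8/3:ℝ)^((t+1) + (3/5)*n) :=
      Real.rpow_le_rpow_of_exponent_le (by norm_num) e2
    have e4 : (8/3:ℝ)^((t+1) + (3/5)*n) = (8/3:ℝ)^(t+1) * ((8/3:ℝ)^((3:ℝ)/5))^n := by
      rw [Real.rpow_add (by norm_num), ← Real.rpow_natCast ((8/3:ℝ)^((3:ℝ)/5)) n,
        ← Real.rpow_mul (by norm_num : (0:ℝ) ≤ 8/3)]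
    have e5 : ((8/3:ℝ)^((3:ℝ)/5))^n ≤ (1803/1000:ℝ)^n := by
      apply pow_le_pow_left₀ (by positivity)
      have : ((3:ℝ)/5) = ((3:ℕ):ℝ)/((5:ℕ):ℝ) := by norm_num
      rw [this]
      apply le_of_lt
      apply rpow_frac_lt (by norm_num) (by norm_num) (by norm_num)
      norm_num
    calc ((8:ℝ)/3)^(N-n) = ((8:ℝ)/3)^(((N-n:ℕ)):ℝ) := e1
      _ ≤ (8/3:ℝ)^((t+1) + (3/5)*n) := e3
      _ = (8/3:ℝ)^(t+1) * ((8/3:ℝ)^((3:ℝ)/5))^n := e4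
      _ ≤ (8/3:ℝ)^(t+1) * (1803/1000:ℝ)^n := by
          apply mul_le_mul_of_nonneg_left e5 (by positivity)
  have hrpos : (0:ℝ) < (8/3:ℝ)^(t+1) := Real.rpow_pos_of_pos (by norm_num) _
  calc hseq t n = gchoose y n / 3^n := rfl
    _ ≤ ((8/5)^n * ((8:ℝ)/3)^(N-n)) / 3^n := by
        apply div_le_div_of_nonneg_right (le_trans step1 step2) (by positivity)
    _ ≤ ((8/5)^n * ((8/3:ℝ)^(t+1) * (1803/1000:ℝ)^n)) / 3^n := by
        apply div_le_div_of_nonneg_right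
          (mul_le_mul_of_nonneg_left step3 (by positivity)) (by positivity)
    _ ≤ (8/3:ℝ)^(t+1) * (962/1000:ℝ)^n := by
        have h30 : (0:ℝ) < 3^n := by positivity
        rw [div_le_iff₀ h30]
        calc ((8:ℝ)/5)^n * ((8/3:ℝ)^(t+1) * (1803/1000:ℝ)^n)
            = (8/3:ℝ)^(t+1) * ((8/5:ℝ)*(1803/1000))^n := by rw [mul_pow]; ring
          _ ≤ (8/3:ℝ)^(t+1) * ((962/1000:ℝ)*3)^n := by
              apply mul_le_mul_of_nonneg_left
                (pow_le_pow_left₀ (by positivity) (by norm_num) n) hrpos.le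
          _ = (8/3:ℝ)^(t+1) * (962/1000:ℝ)^n * 3^n := by rw [mul_pow]; ring

lemma summable_hseq {t : ℝ} (ht : 0 ≤ t) : Summable (hseq t) := by
  apply Summable.of_nonneg_of_le (fun n => (hseq_pos ht n).le) (fun n => hseq_le ht n)
  apply Summable.mul_left
  exact summable_geometric_of_lt_one (by norm_num) (by norm_num)

/-! ### The series -/

lemma A_pos {p : ℝ} (hp : 0 < p) (k : ℕ) : 0 < A p k := by
  cases k with
  | zero => norm_num
  | succ k =>
    rw [A_succ]
    have hal := one_lt_al
    have hk : (0:ℝ) ≤ k := Nat.cast_nonneg k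
    apply mul_pos (by positivity)
    apply gchoose_pos
    nlinarith

lemma A_mono {p p' : ℝ} (hp : 0 < p) (hpp : p ≤ p') (k : ℕ) : A p k ≤ A p' k := by
  cases k with
  | zero => norm_num
  | succ k =>
    rw [A_succ, A_succ]
    have hal := one_lt_al
    have hk : (0:ℝ) ≤ k := Nat.cast_nonneg k
    have h1 : (k:ℝ) - 1 ≤ p + ((k:ℝ)+1)*al - 1 := by nlinarith
    have h2 : 0 < gchoose (p + ((k:ℝ)+1)*al - 1) k := gchoose_pos (by nlinarith)
    have hp' : 0 < p' := lt_of_lt_of_le hp hpp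
    have hk1 : (0:ℝ) < (k:ℝ)+1 := by positivity
    apply mul_le_mul (div_le_div_of_nonneg_right hpp hk1.le)
      (gchoose_mono k h1 (by linarith)) h2.le (div_nonneg hp'.le hk1.le)

noncomputable def aterm (p : ℝ) (k : ℕ) : ℝ := A p k / 3^k

lemma aterm_pos {p : ℝ} (hp : 0 < p) (k : ℕ) : 0 < aterm p k :=
  div_pos (A_pos hp k) (by positivity)

lemma aterm_succ_eq {p : ℝ} (k : ℕ) :
    aterm p (k+1) = (p/(3*(k+1))) * hseq (p+al-1) k := by
  rw [aterm, A_succ, hseq, show p + ((k:ℝ)+1)*al - 1 = (p+al-1) + k*al by push_cast; ring,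
    pow_succ]
  push_cast
  rw [div_mul_eq_mul_div, div_div, div_mul_div_comm]
  congr 1
  ring

lemma summable_aterm {p : ℝ} (hp : 0 < p) : Summable (aterm p) := by
  rw [← summable_nat_add_iff 1]
  have hal := one_lt_al
  have ht' : (0:ℝ) ≤ p + al - 1 := by linarith
  apply Summable.of_nonneg_of_le (fun k => (aterm_pos hp (k+1)).le)
    (fun k => ?_) (((summable_hseq ht').mul_left (p/3)))
  rw [aterm_succ_eq]
  have h1 : 0 < hseq (p+al-1) k := hseq_pos ht' k
  have h2 : p/(3*((k:ℝ)+1)) ≤ p/3 := by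
    apply div_le_div_of_nonneg_left hp.le (by norm_num)
    have : (0:ℝ) ≤ k := Nat.cast_nonneg k
    nlinarith
  push_cast
  exact mul_le_mul_of_nonneg_right h2 h1.le

noncomputable def Fa (p : ℝ) : ℝ := ∑' k, aterm p k
noncomputable def Gg (t : ℝ) : ℝ := ∑' n, hseq t n

lemma one_le_Fa {p : ℝ} (hp : 0 < p) : 1 ≤ Fa p := by
  have h := Summable.le_tsum (summable_aterm hp) 0 (fun j _ => (aterm_pos hp j).le)
  simpa [aterm, Fa] using h

lemma Fa_mono {p p' : ℝ} (hp : 0 < p) (hpp : p ≤ p') : Fa p ≤ Fa p' :=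
  Summable.tsum_le_tsum (fun k => div_le_div_of_nonneg_right (A_mono hp hpp k) (by positivity))
    (summable_aterm hp) (summable_aterm (lt_of_lt_of_le hp hpp))

lemma summable_norm_aterm {p : ℝ} (hp : 0 < p) : Summable (fun k => ‖aterm p k‖) := by
  have : (fun k => ‖aterm p k‖) = aterm p := by
    funext k; rw [Real.norm_eq_abs, abs_of_pos (aterm_pos hp k)]
  rw [this]; exact summable_aterm hp

lemma summable_norm_hseq {t : ℝ} (ht : 0 ≤ t) : Summable (fun n => ‖hseq t n‖) := by
  have : (fun n => ‖hseq t n‖) = hseq t := by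
    funext n; rw [Real.norm_eq_abs, abs_of_pos (hseq_pos ht n)]
  rw [this]; exact summable_hseq ht

lemma conv1 {u v : ℝ} (hu : 0 < u) (hv : 0 < v) : Fa u * Fa v = Fa (u+v) := by
  rw [Fa, Fa, Fa,
    tsum_mul_tsum_eq_tsum_sum_range_of_summable_norm (summable_norm_aterm hu)
      (summable_norm_aterm hv)]
  apply tsum_congr
  intro n
  have : ∀ k ∈ range (n+1), aterm u k * aterm v (n-k) = (A u k * A v (n-k)) / 3^n := by
    intro k hk
    simp only [mem_range, Nat.lt_succ_iff] at hk
    rw [aterm, aterm, div_mul_div_comm, ← pow_add]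
    congr 2
    omega
  rw [Finset.sum_congr rfl this, ← Finset.sum_div, R1 n u v, aterm]

lemma conv2 {u t : ℝ} (hu : 0 < u) (ht : 0 ≤ t) : Fa u * Gg t = Gg (u+t) := by
  rw [Fa, Gg, Gg,
    tsum_mul_tsum_eq_tsum_sum_range_of_summable_norm (summable_norm_aterm hu)
      (summable_norm_hseq ht)]
  apply tsum_congr
  intro n
  have : ∀ k ∈ range (n+1), aterm u k * hseq t (n-k) = (A u k * Bg t (n-k)) / 3^n := by
    intro k hk
    simp only [mem_range, Nat.lt_succ_iff] at hk
    rw [aterm, hseq, Bg, div_mul_div_comm, ← pow_add]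
    congr 2
    omega
  rw [Finset.sum_congr rfl this, ← Finset.sum_div, R2 n u t, hseq, Bg]

lemma Fa_one_eq : Fa 1 = 1 + Fa al / 3 := by
  have hal := one_lt_al
  rw [Fa, Summable.tsum_eq_zero_add (summable_aterm one_pos)]
  have e1 : ∀ k : ℕ, aterm 1 (k+1) = aterm al k / 3 := by
    intro k
    rw [aterm, aterm, A_one_succ, pow_succ]
    field_simp
  simp only [e1]
  rw [tsum_div_const]
  simp [aterm, Fa]

lemma Gg_pos {t : ℝ} (ht : 0 ≤ t) : 0 < Gg t :=
  Summable.tsum_pos (summable_hseq ht) (fun n => (hseq_pos ht n).le) 0 (hseq_pos ht 0)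

lemma Gstep {t : ℝ} (ht : 0 ≤ t) : Gg (t+1) = Fa 1 * Gg t := by
  rw [conv2 one_pos ht, add_comm]

lemma Glin {t : ℝ} (ht : 0 < t) : (1-al) * Gg (t+1) + al * Gg t = Fa (t+1) := by
  have hs1 : Summable (fun n => (1-al) * hseq (t+1) n) :=
    (summable_hseq (by linarith)).mul_left _
  have hs2 : Summable (fun n => al * hseq t n) := (summable_hseq ht.le).mul_left _
  rw [Fa, Gg, Gg, ← tsum_mul_left, ← tsum_mul_left, ← Summable.tsum_add hs1 hs2]
  apply tsum_congr
  intro n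
  have hne : t + 1 + (n:ℝ)*al ≠ 0 := by
    have := one_lt_al
    have : (0:ℝ) ≤ (n:ℝ)*al := by positivity
    nlinarith
  have h7 := I7 t n hne
  rw [aterm, hseq, hseq, show t + 1 + (n:ℝ)*al = (t+1) + n*al by ring] at *
  rw [show (t+1) + (n:ℝ)*al = t + 1 + n*al by ring]
  field_simp
  rw [mul_comm al (n:ℝ)]
  linarith [h7]

/-! ### `Fa` is an exponential -/

lemma Fa_pow {u : ℝ} (hu : 0 < u) : ∀ m : ℕ, Fa ((m+1) * u) = (Fa u)^(m+1) := by
  intro m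
  induction m with
  | zero => simp
  | succ m ih =>
    have h1 : ((m:ℝ)+1+1) * u = ((m:ℝ)+1) * u + u := by ring
    push_cast [h1]
    push_cast at ih
    rw [← conv1 (by positivity) hu, ih, pow_succ]
    ring

lemma Fa_one_pos : (0:ℝ) < Fa 1 := lt_of_lt_of_le one_pos (one_le_Fa one_pos)

lemma Fa_nat (m : ℕ) : Fa ((m:ℝ)+1) = (Fa 1)^(m+1) := by
  have := Fa_pow one_pos m
  rw [mul_one] at this
  exact this

lemma Fa_rat {a b : ℕ} (ha : 0 < a) (hb : 0 < b) :
    Fa ((a:ℝ)/(b:ℝ)) = (Fa 1) ^ ((a:ℝ)/(b:ℝ)) := by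
  have hb0 : (0:ℝ) < b := by exact_mod_cast hb
  have hx : (0:ℝ) < (a:ℝ)/b := div_pos (by exact_mod_cast ha) hb0
  set x := Fa ((a:ℝ)/b) with hxdef
  have hx1 : 1 ≤ x := one_le_Fa hx
  have hxpos : (0:ℝ) < x := lt_of_lt_of_le one_pos hx1
  have hpow : x ^ b = Fa 1 ^ a := by
    have h1 := Fa_pow hx (b-1)
    have e1 : ((b-1:ℕ):ℝ) + 1 = (b:ℝ) := by
      have : (1:ℕ) ≤ b := hb
      push_cast [Nat.cast_sub this]
      ring
    rw [e1] at h1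
    have e2 : (b:ℝ) * ((a:ℝ)/b) = (a:ℝ) := by field_simp
    rw [e2] at h1
    have e3 : b - 1 + 1 = b := by omega
    rw [e3] at h1
    have h2 : Fa ((a:ℝ)) = Fa 1 ^ a := by
      have := Fa_nat (a-1)
      have e4 : ((a-1:ℕ):ℝ) + 1 = (a:ℝ) := by
        have : (1:ℕ) ≤ a := ha
        push_cast [Nat.cast_sub this]
        ring
      have e5 : a - 1 + 1 = a := by omega
      rw [e4, e5] at this
      exact this
    rw [← h1, ← h2]
  have hbne : ((b:ℕ):ℝ) ≠ 0 := by positivity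
  calc x = (x ^ b) ^ ((1:ℝ)/b) := by
        rw [← Real.rpow_natCast x b, ← Real.rpow_mul hxpos.le, mul_one_div,
          div_self hbne, Real.rpow_one]
    _ = (Fa 1 ^ a) ^ ((1:ℝ)/b) := by rw [hpow]
    _ = Fa 1 ^ ((a:ℝ)/(b:ℝ)) := by
        rw [← Real.rpow_natCast (Fa 1) a, ← Real.rpow_mul Fa_one_pos.le, mul_one_div]

lemma Fa_rat' {q : ℚ} (hq : 0 < q) : Fa (q:ℝ) = (Fa 1) ^ ((q:ℝ)) := by
  have hnum : 0 < q.num := Rat.num_pos.mpr hq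
  have e : (q:ℝ) = ((q.num.toNat:ℕ):ℝ)/((q.den:ℕ):ℝ) := by
    have h := Int.toNat_of_nonneg hnum.le
    rw [Rat.cast_def]
    have h2 : ((q.num.toNat:ℕ):ℝ) = ((q.num:ℤ):ℝ) := by exact_mod_cast h
    rw [h2]
  rw [e]
  exact Fa_rat (by omega) q.pos

lemma Fa_rpow {x : ℝ} (hx : 0 < x) : Fa x = (Fa 1) ^ x := by
  have hc0 := Fa_one_pos
  have hcont : Continuous fun s : ℝ => (Fa 1) ^ s := by
    have e : (fun s : ℝ => (Fa 1) ^ s) = fun s => Real.exp (Real.log (Fa 1) * s) := by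
      funext s; rw [Real.rpow_def_of_pos hc0]
    rw [e]
    exact Real.continuous_exp.comp (continuous_const.mul continuous_id)
  apply le_antisymm
  · by_contra hlt
    push_neg at hlt
    set ε := Fa x - (Fa 1) ^ x with hε
    have hεpos : 0 < ε := by simp [hε]; linarith
    obtain ⟨δ, hδ0, hδ⟩ := Metric.continuousAt_iff.mp hcont.continuousAt ε hεpos
    obtain ⟨q, hq1, hq2⟩ := exists_rat_btwn (lt_add_of_pos_right x hδ0)
    have hq0 : (0:ℝ) < (q:ℝ) := lt_trans hx hq1
    have hqr : Fa (q:ℝ) = (Fa 1) ^ ((q:ℝ)) := Fa_rat' (by exact_mod_cast hq0)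
    have hd : dist (q:ℝ) x < δ := by
      rw [Real.dist_eq, abs_of_pos (by linarith)]
      linarith
    have h2 := hδ hd
    rw [Real.dist_eq] at h2
    have h3 := abs_lt.mp h2
    have h4 : Fa x ≤ Fa (q:ℝ) := Fa_mono hx hq1.le
    rw [hqr] at h4
    simp only [hε] at h3
    linarith [h3.2]
  · by_contra hlt
    push_neg at hlt
    set ε := (Fa 1) ^ x - Fa x with hε
    have hεpos : 0 < ε := by simp [hε]; linarith
    obtain ⟨δ, hδ0, hδ⟩ := Metric.continuousAt_iff.mp hcont.continuousAt ε hεpos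
    have hlo : max (x - δ) (x/2) < x := max_lt (by linarith) (by linarith)
    obtain ⟨q, hq1, hq2⟩ := exists_rat_btwn hlo
    have hq0 : (0:ℝ) < (q:ℝ) :=
      lt_trans (by linarith : (0:ℝ) < x/2) (lt_of_le_of_lt (le_max_right (x-δ) (x/2)) hq1)
    have hqr : Fa (q:ℝ) = (Fa 1) ^ ((q:ℝ)) := Fa_rat' (by exact_mod_cast hq0)
    have hd : dist (q:ℝ) x < δ := by
      rw [Real.dist_eq, abs_of_nonpos (by linarith)]
      have := lt_of_le_of_lt (le_max_left (x-δ) (x/2)) hq1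
      linarith
    have h2 := hδ hd
    rw [Real.dist_eq] at h2
    have h3 := abs_lt.mp h2
    have h4 : Fa (q:ℝ) ≤ Fa x := Fa_mono (by exact_mod_cast hq0) hq2.le
    rw [hqr] at h4
    simp only [hε] at h3
    linarith [h3.1]

/-! ### Pinning down `Fa 1 = 2` -/

lemma al_pos : (0:ℝ) < al := lt_trans one_pos one_lt_al

lemma Fa_one_eq_two : Fa 1 = 2 := by
  have hal1 := one_lt_al
  have hal2 := al_lb
  have hal3 := al_ub
  set c := Fa 1 with hcdef
  have hc1 : 1 ≤ c := one_le_Fa one_pos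
  have hcal : c ^ al = 3*c - 3 := by
    have h := Fa_one_eq
    rw [Fa_rpow al_pos, ← hcdef] at h
    linarith
  have hG1 : 0 < Gg 1 := Gg_pos (by norm_num)
  have hkey : ((1-al) * c + al) * Gg 1 = c ^ (2:ℝ) := by
    have h1 : Gg (1+1) = c * Gg 1 := Gstep (by norm_num)
    have h2 := Glin (t := 1) one_pos
    have h3 : Fa (1+1) = c ^ (2:ℝ) := by
      rw [Fa_rpow (by norm_num : (0:ℝ) < 1+1), ← hcdef]
      norm_num
    calc ((1-al)*c + al) * Gg 1 = (1-al)*(c*Gg 1) + al*Gg 1 := by ring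
      _ = (1-al)*Gg (1+1) + al*Gg 1 := by rw [h1]
      _ = Fa (1+1) := h2
      _ = c ^ (2:ℝ) := h3
  have hc2pos : (0:ℝ) < c ^ (2:ℝ) := Real.rpow_pos_of_pos (by linarith) _
  have hpos : 0 < (1-al)*c + al := by
    by_contra hcon
    push_neg at hcon
    nlinarith [hkey, hc2pos, mul_nonneg (neg_nonneg.mpr hcon) hG1.le]
  have hcM : c < 19/7 := by
    nlinarith [mul_le_mul_of_nonneg_right hal2.le (by linarith : (0:ℝ) ≤ c - 1), hpos]
  have h2al : (2:ℝ)^al = 3 := two_rpow_al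
  have hMal : ((19:ℝ)/7)^al < 36/7 := by
    have h1 : ((19:ℝ)/7)^al ≤ ((19:ℝ)/7)^(((8:ℕ):ℝ)/((5:ℕ):ℝ)) := by
      apply Real.rpow_le_rpow_of_exponent_le (by norm_num)
      push_cast
      linarith
    have h2 : ((19:ℝ)/7)^(((8:ℕ):ℝ)/((5:ℕ):ℝ)) < 4.95 :=
      rpow_frac_lt (by norm_num) (by norm_num) (by norm_num) (by norm_num)
    calc ((19:ℝ)/7)^al ≤ _ := h1
      _ < 4.95 := h2
      _ < 36/7 := by norm_num
  have sc := strictConvexOn_rpow one_lt_al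
  rcases lt_trichotomy c 2 with h | h | h
  · exfalso
    set d : ℝ := 19/7 - c with hd
    have hd0 : 0 < d := by rw [hd]; linarith
    have ha0 : 0 < (5/7)/d := by positivity
    have hb0 : 0 < (2-c)/d := div_pos (by linarith) hd0
    have hab : (5/7)/d + (2-c)/d = 1 := by
      have e0 : (5:ℝ)/7 + (2-c) = d := by rw [hd]; ring
      rw [← add_div, e0, div_self hd0.ne']
    have hcmem : c ∈ Set.Ici (0:ℝ) := by simp only [Set.mem_Ici]; linarith
    have hMmem : (19/7:ℝ) ∈ Set.Ici (0:ℝ) := by norm_num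
    have hne : c ≠ 19/7 := by linarith
    have key := sc.2 hcmem hMmem hne ha0 hb0 hab
    simp only [smul_eq_mul] at key
    have e : (5/7)/d * c + (2-c)/d * (19/7) = 2 := by
      have e2 : (5/7)*c + (2-c)*(19/7) = 2*d := by rw [hd]; ring
      calc (5/7)/d * c + (2-c)/d * (19/7) = ((5/7)*c + (2-c)*(19/7))/d := by ring
        _ = 2*d/d := by rw [e2]
        _ = 2 := by rw [mul_div_assoc, div_self hd0.ne', mul_one]
    rw [e, h2al, hcal] at key
    have hb19 : (2-c)/d * ((19:ℝ)/7)^al < (2-c)/d * (36/7) :=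
      mul_lt_mul_of_pos_left hMal hb0
    have efin : (5/7)/d * (3*c-3) + (2-c)/d * (36/7) = 3 := by
      have e2 : (5/7)*(3*c-3) + (2-c)*(36/7) = 3*d := by rw [hd]; ring
      calc (5/7)/d * (3*c-3) + (2-c)/d * (36/7)
          = ((5/7)*(3*c-3) + (2-c)*(36/7))/d := by ring
        _ = 3*d/d := by rw [e2]
        _ = 3 := by rw [mul_div_assoc, div_self hd0.ne', mul_one]
    nlinarith [key, hb19, efin]
  · exact h
  · exfalso
    set d : ℝ := 19/7 - c with hd
    have hd0 : 0 < d := by rw [hd]; linarith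
    have ha0 : 0 < 7*d/5 := by positivity
    have hb0 : 0 < 7*(c-2)/5 := div_pos (by linarith) (by norm_num)
    have hab : 7*d/5 + 7*(c-2)/5 = 1 := by rw [hd]; ring
    have h2mem : (2:ℝ) ∈ Set.Ici (0:ℝ) := by norm_num
    have hMmem : (19/7:ℝ) ∈ Set.Ici (0:ℝ) := by norm_num
    have hne : (2:ℝ) ≠ 19/7 := by norm_num
    have key := sc.2 h2mem hMmem hne ha0 hb0 hab
    simp only [smul_eq_mul] at key
    have e : 7*d/5 * 2 + 7*(c-2)/5 * (19/7) = c := by rw [hd]; ring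
    rw [e, h2al, hcal] at key
    have hb19 : 7*(c-2)/5 * ((19:ℝ)/7)^al < 7*(c-2)/5 * (36/7) :=
      mul_lt_mul_of_pos_left hMal hb0
    have efin : 7*d/5 * 3 + 7*(c-2)/5 * (36/7) = 3*c-3 := by rw [hd]; ring
    nlinarith [key, hb19, efin]

lemma Gg_eval {t : ℝ} (ht : 0 < t) : Gg t = (2:ℝ)^(t+1)/(2-al) := by
  have hal2 := al_lt_two
  have h1 : Gg (t+1) = 2 * Gg t := by rw [Gstep ht.le, Fa_one_eq_two]
  have h2 := Glin ht
  have h3 : Fa (t+1) = (2:ℝ)^(t+1) := by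
    rw [Fa_rpow (by linarith), Fa_one_eq_two]
  rw [h1, h3] at h2
  have h4 : (2-al) * Gg t = (2:ℝ)^(t+1) := by linarith
  field_simp [show (2:ℝ)-al ≠ 0 by linarith]
  linarith [h4]

end S13


theorem stmt13 (x : ℝ) (hx : 16 < x) :
    (3 / 2) * (∑' b : ℕ,
        (3 : ℝ) ^ (-(b : ℤ)) * gchoose (b * Real.logb 2 3 + Real.logb 2 x - 4) b) - 1 / 2
      = (3 / 16) * x / (2 - Real.logb 2 3) - 1 / 2 := by
  have hx0 : (0:ℝ) < x := by linarith
  set t : ℝ := Real.logb 2 x - 4 with htdef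
  have ht : 0 < t := by
    rw [htdef]
    have h16 : Real.logb 2 16 = 4 := by
      rw [show (16:ℝ) = (2:ℝ)^(4:ℝ) by
        rw [show (4:ℝ) = ((4:ℕ):ℝ) by norm_num, Real.rpow_natCast]; norm_num]
      exact Real.logb_rpow (by norm_num) (by norm_num)
    have := Real.logb_lt_logb (b := 2) (by norm_num) (by norm_num : (0:ℝ) < 16) hx
    linarith [h16 ▸ this]
  have e1 : ∑' b : ℕ,
      (3 : ℝ) ^ (-(b : ℤ)) * gchoose (b * Real.logb 2 3 + Real.logb 2 x - 4) b = S13.Gg t := by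
    rw [S13.Gg]
    apply tsum_congr
    intro n
    rw [S13.hseq, show Real.logb 2 3 = S13.al from rfl,
      show (n:ℝ) * S13.al + Real.logb 2 x - 4 = t + n * S13.al by rw [htdef]; ring,
      zpow_neg, zpow_natCast]
    ring
  rw [e1, S13.Gg_eval ht]
  have h2t : (2:ℝ)^(t+1) = x/8 := by
    rw [htdef, show Real.logb 2 x - 4 + 1 = Real.logb 2 x - 3 by ring,
      Real.rpow_sub (by norm_num), Real.rpow_logb (by norm_num) (by norm_num) hx0,
      show (3:ℝ) = ((3:ℕ):ℝ) by norm_num, Real.rpow_natCast]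
    norm_num
  rw [h2t]
  have hal2 : S13.al < 2 := S13.al_lt_two
  have hne : (2:ℝ) - Real.logb 2 3 ≠ 0 := by
    have : Real.logb 2 3 = S13.al := rfl
    rw [this]
    intro hcon
    rw [sub_eq_zero] at hcon
    exact absurd hcon.symm (ne_of_lt hal2)
  rw [show Real.logb 2 3 = S13.al from rfl] at hne ⊢
  field_simp
  ring
end
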